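/- arXiv:1404.7148 — 3 statements merged into one kernel-verified Lean document; each statement's English description precedes it below -/
import Mathlib

section
/- For integers N ≥ 1 and i, consider the formal differential operator E_i = ∑_{s₁>i, s₂>i} x_{s₁+s₂-i} ∂x_{s₁} ∂x_{s₂} acting on the polynomial ring ℂ[x_n : n ∈ ℤ]. If i₁, …, i_{N+1} are integers all greater than i, then E_i^N(x_{i₁} ⋯ x_{i_{N+1}}) = c_N · x_M, where M = i₁ + ⋯ + i_{N+1} - N·i and c_N = 2^N · ∏_{s=2}^{N+1} binom(s, 2). -/
/-!
View the monomial `x_{a₁} ⋯ x_{aₙ}` as the product over the multiset `m = {a₁, …, aₙ}`. Then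
`∂x_{s₁} ∂x_{s₂}` of it is `m.count s₂ * (m.erase s₂).count s₁` times the monomial of `m` with one
`s₂` and one `s₁` removed; that coefficient counts the ordered pairs of distinct positions of `m`
carrying `s₂` and `s₁`. So if all indices exceed `i`, `E_i` sends the monomial to a sum, over the
`n (n - 1)` such pairs, of monomials with `n - 1` factors, all indices still `> i` and index sum
lowered by `i`. Since `E_i` is additive, induction on `N` gives
`c_{N+1} = (N + 2) (N + 1) c_N = 2 binom(N + 2, 2) c_N`.
-/

open MvPolynomial

/-- The operator `E_i = ∑_{s₁>i, s₂>i} x_{s₁+s₂-i} ∂x_{s₁} ∂x_{s₂}` on `ℂ[x_n : n ∈ ℤ]`. -/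
noncomputable def Eop (i : ℤ) (p : MvPolynomial ℤ ℂ) : MvPolynomial ℤ ℂ :=
  ∑ᶠ s : ℤ × ℤ, if i < s.1 ∧ i < s.2 then
    X (s.1 + s.2 - i) * pderiv s.1 (pderiv s.2 p) else 0

section MultisetMonomial

variable {σ R : Type*} [DecidableEq σ] [CommSemiring R]

theorem pderiv_multiset_prod_X (s : σ) (m : Multiset σ) :
    pderiv s (m.map (X : σ → MvPolynomial σ R)).prod =
      m.count s • ((m.erase s).map X).prod := by
  induction m using Multiset.induction_on with
  | empty => simp
  | cons a m ih =>
    rw [Multiset.map_cons, Multiset.prod_cons, pderiv_mul, ih, mul_smul_comm]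
    by_cases h : a = s
    · subst h
      rw [pderiv_X_self, one_mul, Multiset.count_cons_self, Multiset.erase_cons_head]
      by_cases ha : a ∈ m
      · rw [Multiset.prod_map_erase ha, succ_nsmul']
      · simp [Multiset.count_eq_zero_of_notMem ha]
    · rw [pderiv_X_of_ne h, zero_mul, zero_add, Multiset.count_cons_of_ne (Ne.symm h),
        Multiset.erase_cons_tail m h, Multiset.map_cons, Multiset.prod_cons]

theorem pderiv_pderiv_multiset_prod_X (s₁ s₂ : σ) (m : Multiset σ) :
    pderiv s₁ (pderiv s₂ (m.map (X : σ → MvPolynomial σ R)).prod) =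
      (m.count s₂ * (m.erase s₂).count s₁) • (((m.erase s₂).erase s₁).map X).prod := by
  rw [pderiv_multiset_prod_X, map_nsmul, pderiv_multiset_prod_X, smul_smul]

end MultisetMonomial

theorem Multiset.sum_count_mul_count_erase {α : Type*} [DecidableEq α] (m : Multiset α) :
    ∑ s ∈ m.toFinset ×ˢ m.toFinset, m.count s.2 * (m.erase s.2).count s.1 =
      card m * (card m - 1) := by
  rw [Finset.sum_product_right]
  calc ∑ b ∈ m.toFinset, ∑ a ∈ m.toFinset, m.count b * (m.erase b).count a
      = ∑ b ∈ m.toFinset, m.count b * (card m - 1) := by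
        refine Finset.sum_congr rfl fun b hb => ?_
        rw [← Finset.mul_sum, Multiset.sum_count_eq_card fun a ha =>
          Multiset.mem_toFinset.2 (Multiset.mem_of_mem_erase ha),
          Multiset.card_erase_of_mem (Multiset.mem_toFinset.1 hb), Nat.pred_eq_sub_one]
    _ = card m * (card m - 1) := by rw [← Finset.sum_mul, Multiset.toFinset_sum_count_eq]

theorem two_pow_mul_prod_choose_two_succ (N : ℕ) :
    (2 : ℂ) ^ (N + 1) * ∏ s ∈ Finset.Icc 2 (N + 2), (s.choose 2 : ℂ) =
      ((N + 2) * (N + 1) : ℕ) * ((2 : ℂ) ^ N * ∏ s ∈ Finset.Icc 2 (N + 1), (s.choose 2 : ℂ)) := by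
  have h : (N + 2) * (N + 1) = (N + 2).choose 2 * 2 := by
    simpa using Nat.add_one_mul_choose_eq (N + 1) 1
  rw [Finset.prod_Icc_succ_top (by omega), h]
  push_cast
  ring

theorem Eop_summand_support_finite (i : ℤ) (p : MvPolynomial ℤ ℂ) :
    (Function.support fun s : ℤ × ℤ => if i < s.1 ∧ i < s.2 then
      X (s.1 + s.2 - i) * pderiv s.1 (pderiv s.2 p) else 0).Finite := by
  refine ((p.vars.biUnion fun b => (pderiv b p).vars) ×ˢ p.vars).finite_toSet.subset
    fun s hs => ?_
  have hD : pderiv s.1 (pderiv s.2 p) ≠ 0 := fun h0 => hs (by simp [h0])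
  have h₂ : s.2 ∈ p.vars := by
    by_contra h
    exact hD (by rw [pderiv_eq_zero_of_notMem_vars h, map_zero])
  have h₁ : s.1 ∈ (pderiv s.2 p).vars := by
    by_contra h
    exact hD (pderiv_eq_zero_of_notMem_vars h)
  simp only [Finset.coe_product, Set.mem_prod, Finset.mem_coe, Finset.mem_biUnion]
  exact ⟨⟨s.2, h₂, h₁⟩, h₂⟩

theorem Eop_add (i : ℤ) (p q : MvPolynomial ℤ ℂ) : Eop i (p + q) = Eop i p + Eop i q := by
  rw [Eop, Eop, Eop, ← finsum_add_distrib (Eop_summand_support_finite i p)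
    (Eop_summand_support_finite i q)]
  refine finsum_congr fun s => ?_
  split_ifs <;> simp [mul_add]

noncomputable def EopHom (i : ℤ) : AddMonoid.End (MvPolynomial ℤ ℂ) :=
  AddMonoidHom.mk' (Eop i) (Eop_add i)

theorem iterate_Eop (i : ℤ) (n : ℕ) : (Eop i)^[n] = ⇑(EopHom i ^ n) :=
  (AddMonoid.End.coe_pow _ (EopHom i) n).symm

theorem Eop_multiset_prod_X (i : ℤ) (m : Multiset ℤ) (hm : ∀ a ∈ m, i < a) :
    Eop i (m.map X).prod = ∑ s ∈ m.toFinset ×ˢ m.toFinset,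
      (m.count s.2 * (m.erase s.2).count s.1) •
        (((s.1 + s.2 - i) ::ₘ (m.erase s.2).erase s.1).map X).prod := by
  rw [Eop, finsum_eq_sum_of_support_subset _ (s := m.toFinset ×ˢ m.toFinset)]
  · refine Finset.sum_congr rfl fun s hs => ?_
    obtain ⟨h₁, h₂⟩ := Finset.mem_product.1 hs
    rw [if_pos ⟨hm _ (Multiset.mem_toFinset.1 h₁), hm _ (Multiset.mem_toFinset.1 h₂)⟩,
      pderiv_pderiv_multiset_prod_X, mul_smul_comm, Multiset.map_cons, Multiset.prod_cons]
  · intro s hs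
    by_contra hT
    apply hs
    have hcount : m.count s.2 * (m.erase s.2).count s.1 = 0 := by
      rw [Finset.coe_product, Set.mem_prod, Finset.mem_coe, Finset.mem_coe,
        Multiset.mem_toFinset, Multiset.mem_toFinset] at hT
      by_cases h₂ : s.2 ∈ m
      · have h₁ : s.1 ∉ m.erase s.2 := fun h => hT ⟨Multiset.mem_of_mem_erase h, h₂⟩
        rw [Multiset.count_eq_zero_of_notMem h₁, mul_zero]
      · rw [Multiset.count_eq_zero_of_notMem h₂, zero_mul]
    simp only [pderiv_pderiv_multiset_prod_X, hcount, zero_smul, mul_zero, ite_self]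

theorem iterate_Eop_multiset_prod_X (i : ℤ) (N : ℕ) (m : Multiset ℤ)
    (hcard : Multiset.card m = N + 1) (hm : ∀ a ∈ m, i < a) :
    (Eop i)^[N] (m.map X).prod =
      ((2 : ℂ) ^ N * ∏ s ∈ Finset.Icc 2 (N + 1), (s.choose 2 : ℂ)) • X (m.sum - N * i) := by
  induction N generalizing m with
  | zero =>
    obtain ⟨a, rfl⟩ := Multiset.card_eq_one.1 hcard
    simp
  | succ N ih =>
    have hterm : ∀ s ∈ m.toFinset ×ˢ m.toFinset,
        (EopHom i ^ N) ((m.count s.2 * (m.erase s.2).count s.1) •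
          (((s.1 + s.2 - i) ::ₘ (m.erase s.2).erase s.1).map X).prod) =
        (m.count s.2 * (m.erase s.2).count s.1) •
          (((2 : ℂ) ^ N * ∏ s ∈ Finset.Icc 2 (N + 1), (s.choose 2 : ℂ)) •
            X (m.sum - (N + 1 : ℕ) * i)) := by
      intro s _
      by_cases hzero : m.count s.2 * (m.erase s.2).count s.1 = 0
      · simp only [hzero, zero_smul, map_zero]
      obtain ⟨h₂, h₁⟩ : s.2 ∈ m ∧ s.1 ∈ m.erase s.2 := by
        simpa [Multiset.count_eq_zero, not_or] using hzero
      have hsum₁ := Multiset.sum_erase h₁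
      have hsum₂ := Multiset.sum_erase h₂
      rw [map_nsmul, ← iterate_Eop, ih]
      · congr 3
        rw [Multiset.sum_cons]
        push_cast
        linarith
      · rw [Multiset.card_cons, Multiset.card_erase_of_mem h₁, Multiset.card_erase_of_mem h₂,
          hcard]
        rfl
      · intro a ha
        rcases Multiset.mem_cons.1 ha with rfl | ha
        · linarith [hm _ h₂, hm _ (Multiset.mem_of_mem_erase h₁)]
        · exact hm a (Multiset.mem_of_mem_erase (Multiset.mem_of_mem_erase ha))
    rw [Function.iterate_succ_apply, Eop_multiset_prod_X i m hm, iterate_Eop, map_sum,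
      Finset.sum_congr rfl hterm, ← Finset.sum_smul, Multiset.sum_count_mul_count_erase, hcard,
      ← Nat.cast_smul_eq_nsmul ℂ, smul_smul, Nat.add_sub_cancel, two_pow_mul_prod_choose_two_succ]

theorem stmt3_general (N : ℕ) (i : ℤ) (idx : Fin (N + 1) → ℤ)
    (hidx : ∀ k, i < idx k) :
    (Eop i)^[N] (∏ k, X (idx k)) =
      ((2 : ℂ) ^ N * ∏ s ∈ Finset.Icc 2 (N + 1), (Nat.choose s 2 : ℂ)) •
        X ((∑ k, idx k) - N * i) := by
  have h := iterate_Eop_multiset_prod_X i N (Finset.univ.val.map idx) (by simp)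
    fun a ha => by
      obtain ⟨k, -, rfl⟩ := Multiset.mem_map.1 ha
      exact hidx k
  rwa [Multiset.map_map, ← Finset.prod_eq_multiset_prod, ← Finset.sum_eq_multiset_sum] at h

/-- `E_i^N (x_{i₁} ⋯ x_{i_{N+1}}) = c_N x_M`. -/
theorem stmt3 (N : ℕ) (hN : 1 ≤ N) (i : ℤ) (idx : Fin (N + 1) → ℤ)
    (hidx : ∀ k, i < idx k) :
    (Eop i)^[N] (∏ k, X (idx k)) =
      ((2 : ℂ) ^ N * ∏ s ∈ Finset.Icc 2 (N + 1), (Nat.choose s 2 : ℂ)) •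
        X ((∑ k, idx k) - N * i) :=
  stmt3_general N i idx hidx
end

section
/- For every positive integer N and integer i, there exists a nonzero homogeneous polynomial g ∈ ℂ[x_n : n ∈ ℤ] of degree N+1 in the variables x_j with j > i (so that ∂x_j(g) = 0 for all j ≤ i) satisfying E_i^N(g) = 0, where E_i = ∑_{s₁>i, s₂>i} x_{s₁+s₂-i} ∂x_{s₁} ∂x_{s₂}. -/
/-!
On a monomial `x^σ` whose indices all exceed `i`, `E_i` removes two variables `x_a, x_b` and
inserts `x_{a+b-i}`: every resulting monomial has degree `deg σ - 1` and index sum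
`wt σ - i` (where `wt σ = ∑ j σ_j`), again with all indices above `i`, and the coefficients
add up to `deg σ (deg σ - 1)`. By induction, `E_i^d x^σ = (d+1)! d! x_{wt σ - d i}` whenever
`deg σ = d + 1`, which depends only on the degree and the index sum of `σ`. Hence `E_i^N`
kills the difference of two distinct monomials of degree `N + 1` with equal index sums.
-/

open MvPolynomial

theorem Finsupp.degree_tsub_single_one {ι : Type*} {σ : ι →₀ ℕ} {b : ι} (hb : σ b ≠ 0) :
    (σ - single b 1).degree = σ.degree - 1 := by
  conv_rhs => rw [← sub_add_single_one_cancel hb, map_add, degree_single]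
  rfl

theorem Finsupp.sum_mul_tsub_single_one_apply {ι : Type*} (σ : ι →₀ ℕ) :
    ∑ s ∈ σ.support ×ˢ σ.support, σ s.2 * (σ - single s.2 1 : ι →₀ ℕ) s.1 =
      σ.degree * (σ.degree - 1) := by
  have inner : ∀ b ∈ σ.support, ∑ a ∈ σ.support, (σ - single b 1 : ι →₀ ℕ) a = σ.degree - 1 := by
    intro b hb
    rw [← degree_tsub_single_one (mem_support_iff.mp hb), degree_apply]
    exact (Finset.sum_subset support_tsub fun a _ ha => notMem_support_iff.mp ha).symm
  calc _ = ∑ b ∈ σ.support, σ b * (σ.degree - 1) := by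
        rw [Finset.sum_product_right]
        exact Finset.sum_congr rfl fun b hb => by rw [← inner b hb, Finset.mul_sum]
    _ = σ.degree * (σ.degree - 1) := by rw [← Finset.sum_mul, ← degree_apply]

theorem MvPolynomial.vars_pderiv_subset {R σ : Type*} [CommSemiring R] (i : σ)
    (p : MvPolynomial σ R) : (pderiv i p).vars ⊆ p.vars := by
  intro j hj
  obtain ⟨d, hd, hjd⟩ := (mem_vars_iff_mem_support _).mp hj
  rw [mem_support_iff, coeff_pderiv] at hd
  refine (mem_vars_iff_mem_support _).mpr ⟨d + Finsupp.single i 1, ?_, ?_⟩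
  · exact mem_support_iff.mpr (left_ne_zero_of_mul hd)
  · exact Finsupp.support_mono le_self_add hjd

theorem Finsupp.exists_eq_single_of_degree_eq_one {ι : Type*} {σ : ι →₀ ℕ} (h : σ.degree = 1) :
    ∃ j, σ = single j 1 := by
  obtain ⟨j, hj⟩ : σ.support.Nonempty := by
    rw [Finset.nonempty_iff_ne_empty, Ne, support_eq_empty, ← degree_eq_zero_iff, h]
    exact one_ne_zero
  have hj' := mem_support_iff.mp hj
  refine ⟨j, ?_⟩
  have : σ - single j 1 = 0 := by
    rw [← degree_eq_zero_iff, degree_tsub_single_one hj', h, Nat.sub_self]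
  rw [← sub_add_single_one_cancel hj', this, zero_add]

theorem Finsupp.sub_single_one_sub_single_one_add_add_cancel {ι : Type*} {σ : ι →₀ ℕ} {a b : ι}
    (hb : σ b ≠ 0) (ha : (σ - single b 1 : ι →₀ ℕ) a ≠ 0) :
    σ - single b 1 - single a 1 + single a 1 + single b 1 = σ := by
  rw [sub_add_single_one_cancel ha, sub_add_single_one_cancel hb]

theorem MvPolynomial.pderiv_monomial_of_notMem_support {R σ : Type*} [CommSemiring R] {i : σ}
    {s : σ →₀ ℕ} (a : R) (h : i ∉ s.support) : pderiv i (monomial s a) = 0 := by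
  rw [pderiv_monomial, Finsupp.notMem_support_iff.mp h, Nat.cast_zero, mul_zero, monomial_zero]

namespace Eop

noncomputable def term (i : ℤ) (s : ℤ × ℤ) : MvPolynomial ℤ ℂ →ₗ[ℂ] MvPolynomial ℤ ℂ :=
  if i < s.1 ∧ i < s.2 then
    LinearMap.mulLeft ℂ (X (s.1 + s.2 - i)) ∘ₗ (pderiv s.1).toLinearMap ∘ₗ (pderiv s.2).toLinearMap
  else 0

theorem eq_finsum_term (i : ℤ) (p : MvPolynomial ℤ ℂ) : Eop i p = ∑ᶠ s, term i s p :=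
  finsum_congr fun s => by unfold term; split_ifs <;> rfl

theorem eq_sum_term (i : ℤ) (p : MvPolynomial ℤ ℂ) {S : Finset ℤ} (hS : p.vars ⊆ S) :
    Eop i p = ∑ s ∈ S ×ˢ S, term i s p := by
  rw [eq_finsum_term]
  refine finsum_eq_sum_of_support_subset _ (Function.support_subset_iff'.mpr fun s hs => ?_)
  have hvars : s.1 ∉ p.vars ∨ s.2 ∉ p.vars := by
    simp only [Finset.coe_product, Set.mem_prod, Finset.mem_coe, not_and_or] at hs
    exact hs.imp (fun h h' => h (hS h')) (fun h h' => h (hS h'))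
  unfold term
  split_ifs
  · rcases hvars with h | h
    · simp [pderiv_eq_zero_of_notMem_vars fun h' => h (vars_pderiv_subset _ _ h')]
    · simp [pderiv_eq_zero_of_notMem_vars h]
  · rfl

noncomputable def linearMap (i : ℤ) : Module.End ℂ (MvPolynomial ℤ ℂ) where
  toFun := Eop i
  map_add' p q := by
    let S := (p + q).vars ∪ p.vars ∪ q.vars
    rw [eq_sum_term i (p + q) (S := S) (by grind), eq_sum_term i p (S := S) (by grind),
      eq_sum_term i q (S := S) (by grind), ← Finset.sum_add_distrib]
    simp only [map_add]
  map_smul' c p := by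
    let S := (c • p).vars ∪ p.vars
    rw [eq_sum_term i (c • p) (S := S) (by grind), eq_sum_term i p (S := S) (by grind),
      Finset.smul_sum]
    simp only [map_smul, RingHom.id_apply]

theorem iterate_eq_pow (i : ℤ) (n : ℕ) : (Eop i)^[n] = ⇑(linearMap i ^ n) :=
  (Module.End.coe_pow (linearMap i) n).symm

/-- The exponent of `x_{a+b-i} x^σ / (x_a x_b)` for `s = (a, b)`. -/
noncomputable def contract (i : ℤ) (σ : ℤ →₀ ℕ) (s : ℤ × ℤ) : ℤ →₀ ℕ :=
  Finsupp.single (s.1 + s.2 - i) 1 + (σ - Finsupp.single s.2 1 - Finsupp.single s.1 1)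

section contract

variable {i : ℤ} {σ : ℤ →₀ ℕ} {s : ℤ × ℤ}

theorem degree_contract (h₂ : σ s.2 ≠ 0) (h₁ : (σ - Finsupp.single s.2 1 : ℤ →₀ ℕ) s.1 ≠ 0) :
    (contract i σ s).degree + 1 = σ.degree := by
  conv_rhs => rw [← Finsupp.sub_single_one_sub_single_one_add_add_cancel h₂ h₁]
  simp only [contract, map_add, Finsupp.degree_single]
  ring

theorem weight_contract (h₂ : σ s.2 ≠ 0) (h₁ : (σ - Finsupp.single s.2 1 : ℤ →₀ ℕ) s.1 ≠ 0) :
    Finsupp.weight id (contract i σ s) = Finsupp.weight id σ - i := by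
  conv_rhs => rw [← Finsupp.sub_single_one_sub_single_one_add_add_cancel h₂ h₁]
  simp only [contract, map_add, Finsupp.weight_single, id, one_smul]
  ring

theorem lt_of_mem_support_contract (hσ : ∀ j ∈ σ.support, i < j) (h₂ : σ s.2 ≠ 0)
    (h₁ : (σ - Finsupp.single s.2 1 : ℤ →₀ ℕ) s.1 ≠ 0) : ∀ j ∈ (contract i σ s).support, i < j := by
  have hs₁ : i < s.1 := hσ _ (Finsupp.support_mono tsub_le_self (Finsupp.mem_support_iff.mpr h₁))
  have hs₂ : i < s.2 := hσ _ (Finsupp.mem_support_iff.mpr h₂)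
  intro j hj
  rcases Finset.mem_union.mp (Finsupp.support_add hj) with hj | hj
  · rw [Finset.mem_singleton.mp (Finsupp.support_single_subset hj)]
    omega
  · exact hσ _ (Finsupp.support_mono (tsub_le_self.trans tsub_le_self) hj)

end contract

theorem apply_monomial {i : ℤ} {σ : ℤ →₀ ℕ} (hσ : ∀ j ∈ σ.support, i < j) :
    Eop i (monomial σ 1) = ∑ s ∈ σ.support ×ˢ σ.support,
      ((σ s.2 * (σ - Finsupp.single s.2 1 : ℤ →₀ ℕ) s.1 : ℕ) : ℂ) •
        monomial (contract i σ s) 1 := by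
  rw [eq_sum_term i _ (vars_monomial one_ne_zero).subset]
  refine Finset.sum_congr rfl fun s hs => ?_
  rw [Finset.mem_product] at hs
  simp only [term, if_pos (And.intro (hσ _ hs.1) (hσ _ hs.2)), LinearMap.comp_apply,
    LinearMap.mulLeft_apply, Derivation.coeFn_coe, pderiv_monomial, contract,
    monomial_single_add, pow_one]
  rw [← mul_smul_comm, smul_monomial, smul_eq_mul, mul_one, one_mul, Nat.cast_mul]

open Nat in
theorem iterate_apply_monomial {i : ℤ} (d : ℕ) {σ : ℤ →₀ ℕ} (hσ : ∀ j ∈ σ.support, i < j)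
    (hdeg : σ.degree = d + 1) :
    (Eop i)^[d] (monomial σ 1) =
      (((d + 1)! * d ! : ℕ) : ℂ) • X (Finsupp.weight id σ - d * i) := by
  induction d generalizing σ with
  | zero =>
    obtain ⟨j, rfl⟩ := Finsupp.exists_eq_single_of_degree_eq_one hdeg
    simp [X, Finsupp.weight_single]
  | succ d ih =>
    have step : ∀ s ∈ σ.support ×ˢ σ.support,
        (Eop i)^[d] (((σ s.2 * (σ - Finsupp.single s.2 1 : ℤ →₀ ℕ) s.1 : ℕ) : ℂ) •
          monomial (contract i σ s) 1) =
        ((σ s.2 * (σ - Finsupp.single s.2 1 : ℤ →₀ ℕ) s.1 : ℕ) : ℂ) •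
          (((d + 1)! * d ! : ℕ) : ℂ) • X (Finsupp.weight id σ - (d + 1 : ℕ) * i) := by
      intro s _
      rw [iterate_eq_pow, map_smul, ← iterate_eq_pow]
      by_cases hc : σ s.2 * (σ - Finsupp.single s.2 1 : ℤ →₀ ℕ) s.1 = 0
      · simp only [hc, Nat.cast_zero, zero_smul]
      obtain ⟨h₂, h₁⟩ := mul_ne_zero_iff.mp hc
      have hdeg' : (contract i σ s).degree = d + 1 := by
        have := degree_contract (i := i) h₂ h₁
        omega
      rw [ih (lt_of_mem_support_contract hσ h₂ h₁) hdeg', weight_contract h₂ h₁]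
      congr 3
      push_cast
      ring
    rw [Function.iterate_succ_apply, apply_monomial hσ, iterate_eq_pow, map_sum]
    simp only [← iterate_eq_pow]
    rw [Finset.sum_congr rfl step, ← Finset.sum_smul, ← Nat.cast_sum,
      Finsupp.sum_mul_tsub_single_one_apply, hdeg, smul_smul, ← Nat.cast_mul]
    congr 2
    simp only [factorial_succ, Nat.add_sub_cancel]
    ring

theorem exists_of_weight_eq {i : ℤ} {N : ℕ} {σ₁ σ₂ : ℤ →₀ ℕ} (hne : σ₁ ≠ σ₂)
    (hσ₁ : ∀ j ∈ σ₁.support, i < j) (hσ₂ : ∀ j ∈ σ₂.support, i < j)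
    (hdeg₁ : σ₁.degree = N + 1) (hdeg₂ : σ₂.degree = N + 1)
    (hweight : Finsupp.weight id σ₁ = Finsupp.weight id σ₂) :
    ∃ g : MvPolynomial ℤ ℂ, g ≠ 0 ∧ g.IsHomogeneous (N + 1) ∧
      (∀ j : ℤ, j ≤ i → pderiv j g = 0) ∧ (Eop i)^[N] g = 0 := by
  refine ⟨monomial σ₁ 1 - monomial σ₂ 1,
    sub_ne_zero.mpr ((monomial_left_inj one_ne_zero).not.mpr hne),
    (isHomogeneous_monomial _ hdeg₁).sub (isHomogeneous_monomial _ hdeg₂), fun j hj => ?_, ?_⟩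
  · rw [map_sub, pderiv_monomial_of_notMem_support _ fun h => (hσ₁ j h).not_ge hj,
      pderiv_monomial_of_notMem_support _ fun h => (hσ₂ j h).not_ge hj, sub_zero]
  · rw [iterate_eq_pow, map_sub, ← iterate_eq_pow, iterate_apply_monomial N hσ₁ hdeg₁,
      iterate_apply_monomial N hσ₂ hdeg₂, hweight, sub_self]

end Eop

/-- existence of a nonzero homogeneous `g` of degree `N+1`
in the variables `x_j`, `j > i`, with `E_i^N g = 0`. -/
theorem stmt4 (N : ℕ) (hN : 0 < N) (i : ℤ) :
    ∃ g : MvPolynomial ℤ ℂ, g ≠ 0 ∧ g.IsHomogeneous (N + 1) ∧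
      (∀ j : ℤ, j ≤ i → pderiv j g = 0) ∧ (Eop i)^[N] g = 0 := by
  -- `g = x_{i+1}^N x_{i+N+2} - x_{i+2}^{N+1}`: both monomials have index sum `(N + 1)(i + 2)`.
  set σ₁ : ℤ →₀ ℕ := Finsupp.single (i + 1) N + Finsupp.single (i + N + 2) 1
  set σ₂ : ℤ →₀ ℕ := Finsupp.single (i + 2) (N + 1)
  refine Eop.exists_of_weight_eq (σ₁ := σ₁) (σ₂ := σ₂) ?_ (fun j hj => ?_) (fun j hj => ?_)
    (by simp [σ₁]) (by simp [σ₂]) ?_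
  · exact fun h => by simpa [σ₁, σ₂, hN.ne'] using DFunLike.congr_fun h (i + 1)
  · rcases Finset.mem_union.mp (Finsupp.support_add hj) with h | h <;>
      rw [Finset.mem_singleton.mp (Finsupp.support_single_subset h)] <;> omega
  · rw [Finset.mem_singleton.mp (Finsupp.support_single_subset hj)]
    omega
  · simp only [σ₁, σ₂, map_add, Finsupp.weight_single, id, nsmul_eq_mul]
    push_cast
    ring
end

section
/- Let J, K ∈ ℂ and define operators on ℂ[x_n : n∈ℤ][y_m : m≥1] (allowing formal power series of differential operators): F_n = multiplication by x_n, and H_n = -2 ∑_{m∈ℤ} x_{m+n} ∂x_m + [n<0] y_{-n} + [n>0] 2nK ∂y_n + δ_{n,0} J. Then for all integers m, n: [H_m, F_n] = -2 F_{m+n} as operators on ℂ[x, y]. -/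
open MvPolynomial

/-- Index type for the variables `x_n (n ∈ ℤ)` and `y_m (m ≥ 1)`. -/
abbrev XYVar : Type := ℤ ⊕ ℕ+

/-- `F_n` : multiplication by `x_n`. -/
noncomputable def Fop (n : ℤ) (p : MvPolynomial XYVar ℂ) : MvPolynomial XYVar ℂ :=
  X (Sum.inl n) * p

/-- `H_n = -2 ∑_{m∈ℤ} x_{m+n} ∂x_m + [n<0] y_{-n} + [n>0] 2nK ∂y_n + δ_{n,0} J`. -/
noncomputable def Hop (J K : ℂ) (n : ℤ) (p : MvPolynomial XYVar ℂ) : MvPolynomial XYVar ℂ :=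
  (-2 : ℂ) • (∑ᶠ m : ℤ, X (Sum.inl (m + n)) * pderiv (Sum.inl m) p) +
    (if h : n < 0 then X (Sum.inr ⟨(-n).toNat, by omega⟩) * p else 0) +
    (if h : 0 < n then ((2 * n : ℤ) : ℂ) • (K • pderiv (Sum.inr ⟨n.toNat, by omega⟩) p) else 0) +
    (if n = 0 then J • p else 0)

/-! The operator `∑ₖ x_{k+m} ∂/∂x_k` is a derivation (the sum is finite on each polynomial), so its
commutator with multiplication by `x_n` is multiplication by its value `x_{n+m}` on `x_n`. Every
other term of `H_m` commutes with `x_n`. -/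

namespace MvPolynomial

variable {R σ ι : Type*} [CommSemiring R] {v : ι → σ}

lemma hasFiniteSupport_mul_pderiv (hv : v.Injective) (a : ι → MvPolynomial σ R)
    (p : MvPolynomial σ R) : Function.HasFiniteSupport fun k => a k * pderiv (v k) p := by
  refine (p.vars.finite_toSet.preimage hv.injOn).subset fun k hk => ?_
  by_contra hvk
  exact hk (by simp only [pderiv_eq_zero_of_notMem_vars hvk, mul_zero])

lemma finsum_mul_pderiv_mul (hv : v.Injective) (a : ι → MvPolynomial σ R)
    (p q : MvPolynomial σ R) :
    ∑ᶠ k, a k * pderiv (v k) (p * q) =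
      (∑ᶠ k, a k * pderiv (v k) p) * q + p * ∑ᶠ k, a k * pderiv (v k) q := by
  rw [finsum_mul' _ _ (hasFiniteSupport_mul_pderiv hv a p),
    mul_finsum' _ _ (hasFiniteSupport_mul_pderiv hv a q), ← finsum_add_distrib]
  · exact finsum_congr fun k => by rw [pderiv_mul]; ring
  · exact (hasFiniteSupport_mul_pderiv hv a p).fun_mul_left _
  · exact Function.HasFiniteSupport.fun_mul_right _ (hasFiniteSupport_mul_pderiv hv a q)

lemma finsum_mul_pderiv_X (hv : v.Injective) (a : ι → MvPolynomial σ R) (n : ι) :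
    ∑ᶠ k, a k * pderiv (v k) (X (v n)) = a n := by
  rw [finsum_eq_single _ n fun k hk => by rw [pderiv_X_of_ne (hv.ne hk.symm), mul_zero],
    pderiv_X_self, mul_one]

lemma pderiv_X_mul_of_ne {i j : σ} (h : j ≠ i) (p : MvPolynomial σ R) :
    pderiv i (X j * p) = X j * pderiv i p := by
  rw [pderiv_mul, pderiv_X_of_ne h, zero_mul, zero_add]

end MvPolynomial

/-- `[H_m, F_n] = -2 F_{m+n}` as operators on `ℂ[x, y]`. -/
theorem stmt6 (J K : ℂ) (m n : ℤ) (p : MvPolynomial XYVar ℂ) :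
    Hop J K m (Fop n p) - Fop n (Hop J K m p) = (-2 : ℂ) • Fop (m + n) p := by
  unfold Hop Fop
  rw [finsum_mul_pderiv_mul Sum.inl_injective, finsum_mul_pderiv_X Sum.inl_injective, add_comm n m]
  simp only [pderiv_X_mul_of_ne, ne_eq, reduceCtorEq, not_false_eq_true, smul_eq_C_mul]
  split_ifs <;> ring
end
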